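/- arXiv:1008.4474 — 6 statements merged into one kernel-verified Lean document; each statement's English description precedes it below -/
import Mathlib

section
/- If n is a coset leader of its coset with wt(n) ≥ 1, then there exists a standard basis vector e_i and a vector n' with n = n' + e_i such that n' is a coset leader of its own coset and wt(n') = wt(n) − 1. -/
/-! Clearing a nonzero coordinate `i` of a coset leader `x` lowers its weight by one and gives a
coset leader again: if some `v` in the coset of `x - e_i` were lighter, then `v + e_i`, which lies
in the coset of `x`, would have weight at most `wt v + 1 < wt x`. -/

open Function

lemma update_zero_add_single {ι β : Type*} [DecidableEq ι] [AddZeroClass β] (x : ι → β) (i : ι) :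
    update x i 0 + Pi.single i (x i) = x := by
  ext j
  by_cases h : j = i
  · subst h; simp
  · simp [h]

section Hamming

variable {ι β : Type*} [Fintype ι] [DecidableEq ι] [DecidableEq β]

lemma hammingNorm_single_le_one [Zero β] (i : ι) (a : β) :
    hammingNorm (Pi.single i a : ι → β) ≤ 1 := by
  have hsupp : ∀ j, (Pi.single i a : ι → β) j ≠ 0 → j = i := fun j hj =>
    by_contra fun h => hj (by simp [h])
  refine Finset.card_le_one.mpr fun j hj k hk => ?_
  simp only [Finset.mem_filter, Finset.mem_univ, true_and] at hj hk
  rw [hsupp j hj, hsupp k hk]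

lemma hammingNorm_update_zero_add_one [Zero β] {x : ι → β} {i : ι} (hi : x i ≠ 0) :
    hammingNorm (update x i 0) + 1 = hammingNorm x := by
  have hsupp : (Finset.univ.filter fun j => update x i 0 j ≠ 0) =
      (Finset.univ.filter fun j => x j ≠ 0).erase i := by
    ext j
    by_cases h : j = i <;> simp [h]
  rw [hammingNorm, hsupp, Finset.card_erase_add_one (by simpa using hi), hammingNorm]

lemma hammingNorm_add_single_le [AddGroup β] (v : ι → β) (i : ι) (a : β) :
    hammingNorm (v + Pi.single i a) ≤ hammingNorm v + 1 := by
  have htri := hammingDist_triangle (v + Pi.single i a) v 0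
  rw [hammingDist_zero_right, hammingDist_zero_right, hammingDist_comm,
    hammingDist_eq_hammingNorm, neg_add_cancel_left] at htri
  have hsingle := hammingNorm_single_le_one (β := β) i a
  omega

end Hamming

section CosetLeader

variable {ι R : Type*} [Fintype ι] [DecidableEq ι] [Ring R] [DecidableEq R]

def IsCosetLeader (C : Submodule R (ι → R)) (x : ι → R) : Prop :=
  ∀ v : ι → R, v - x ∈ C → hammingNorm x ≤ hammingNorm v

lemma IsCosetLeader.update_zero {C : Submodule R (ι → R)} {x : ι → R} (hx : IsCosetLeader C x)
    {i : ι} (hi : x i ≠ 0) : IsCosetLeader C (update x i 0) := by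
  intro v hv
  have hcoset : v + Pi.single i (x i) - x = v - update x i 0 := by
    rw [eq_sub_of_add_eq (update_zero_add_single x i)]
    abel
  have hle := hx _ (hcoset ▸ hv)
  have hsingle := hammingNorm_add_single_le v i (x i)
  have hdrop := hammingNorm_update_zero_add_one hi
  omega

end CosetLeader

/-- If `n₀` is a coset leader of its coset with weight at least 1, then it can be
written as `n' + e i` where `n'` is a coset leader of weight one less. -/
theorem coset_leader_descend (n : ℕ) (C : Submodule (ZMod 2) (Fin n → ZMod 2))
    (n₀ : Fin n → ZMod 2)
    (hlead : ∀ v : Fin n → ZMod 2, v - n₀ ∈ C → hammingNorm n₀ ≤ hammingNorm v)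
    (hw : 1 ≤ hammingNorm n₀) :
    ∃ (i : Fin n) (n' : Fin n → ZMod 2),
      n₀ = n' + Pi.single i 1 ∧
      (∀ v : Fin n → ZMod 2, v - n' ∈ C → hammingNorm n' ≤ hammingNorm v) ∧
      hammingNorm n' = hammingNorm n₀ - 1 := by
  obtain ⟨i, hi⟩ := ne_iff.mp (hammingNorm_pos_iff.mp hw)
  have hi1 : n₀ i = 1 := Fin.eq_one_of_ne_zero _ hi
  refine ⟨i, update n₀ i 0, ?_, IsCosetLeader.update_zero hlead hi, ?_⟩
  · rw [← hi1, update_zero_add_single]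
  · have := hammingNorm_update_zero_add_one hi
    omega
end

section
/- For any vector r in F_2^n whose coset has leader weight w ≥ 1, there exists a vector r' with wt(r − r') = 1 whose coset leader weight is strictly smaller, i.e., wt(r̄') = wt(r̄) − 1. Consequently, the leader gradient descent decoding algorithm terminates: iterating this step reaches a vector in C after exactly w steps. -/
/-!
Take a coset leader `v` of `r`, of weight `w ≥ 1`, and a coordinate `i` in its support. Flipping
coordinate `i` of `r` gives `r'` whose coset contains `v` with coordinate `i` cleared, so
`wt(r̄') ≤ w - 1`; conversely the leader weight changes by at most one under a weight-one
perturbation, so `wt(r̄') = w - 1`. Iterating `w` times reaches leader weight `0`, i.e. a codeword.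
-/

/-- The minimal Hamming weight of an element of the coset `y + C`. -/
noncomputable def leaderWeight {n : ℕ} (C : Submodule (ZMod 2) (Fin n → ZMod 2))
    (y : Fin n → ZMod 2) : ℕ :=
  sInf {w : ℕ | ∃ v : Fin n → ZMod 2, v - y ∈ C ∧ hammingNorm v = w}

section HammingNorm

variable {ι : Type*} [Fintype ι] {β : ι → Type*} [∀ i, DecidableEq (β i)]

theorem hammingNorm_add_le [∀ i, AddZeroClass (β i)] (x y : ∀ i, β i) :
    hammingNorm (x + y) ≤ hammingNorm x + hammingNorm y := by
  classical
  refine (Finset.card_le_card fun j => ?_).trans (Finset.card_union_le _ _)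
  contrapose
  simp_all

variable [DecidableEq ι]

theorem hammingNorm_single [∀ i, Zero (β i)] (i : ι) {c : β i} (hc : c ≠ 0) :
    hammingNorm (Pi.single i c) = 1 := by
  refine Finset.card_eq_one.mpr ⟨i, Finset.ext fun j => ?_⟩
  rcases eq_or_ne j i with rfl | hj <;> simp [*]

theorem hammingNorm_sub_single_add_one [∀ i, AddGroup (β i)] {v : ∀ i, β i} {i : ι}
    (hi : v i ≠ 0) : hammingNorm (v - Pi.single i (v i)) + 1 = hammingNorm v := by
  have hsupp : ({j | (v - Pi.single i (v i)) j ≠ 0} : Finset ι) =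
      ({j | v j ≠ 0} : Finset ι).erase i := by
    ext j
    rcases eq_or_ne j i with rfl | hj <;> simp [*]
  rw [hammingNorm, hsupp, Finset.card_erase_add_one (by simpa using hi), hammingNorm]

end HammingNorm

section LeaderWeight

variable {n : ℕ} (C : Submodule (ZMod 2) (Fin n → ZMod 2))

theorem leaderWeight_le_hammingNorm {y v : Fin n → ZMod 2} (h : v - y ∈ C) :
    leaderWeight C y ≤ hammingNorm v :=
  Nat.sInf_le ⟨v, h, rfl⟩

theorem exists_hammingNorm_eq_leaderWeight (y : Fin n → ZMod 2) :
    ∃ v : Fin n → ZMod 2, v - y ∈ C ∧ hammingNorm v = leaderWeight C y :=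
  Nat.sInf_mem (s := {w | ∃ v : Fin n → ZMod 2, v - y ∈ C ∧ hammingNorm v = w})
    ⟨hammingNorm y, y, by simp, rfl⟩

theorem leaderWeight_eq_zero_iff {y : Fin n → ZMod 2} : leaderWeight C y = 0 ↔ y ∈ C := by
  refine ⟨fun h => ?_, fun hy => ?_⟩
  · obtain ⟨v, hv, hw⟩ := exists_hammingNorm_eq_leaderWeight C y
    rw [h, hammingNorm_eq_zero] at hw
    simpa [hw] using hv
  · simpa using leaderWeight_le_hammingNorm C (v := 0) (by simpa using hy)

theorem leaderWeight_add_le (y z : Fin n → ZMod 2) :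
    leaderWeight C (y + z) ≤ leaderWeight C y + hammingNorm z := by
  obtain ⟨v, hv, hw⟩ := exists_hammingNorm_eq_leaderWeight C y
  calc leaderWeight C (y + z) ≤ hammingNorm (v + z) :=
        leaderWeight_le_hammingNorm C (by rwa [add_sub_add_right_eq_sub])
    _ ≤ leaderWeight C y + hammingNorm z := hw ▸ hammingNorm_add_le v z

theorem exists_leaderWeight_eq_sub_one {r : Fin n → ZMod 2} (hr : leaderWeight C r ≠ 0) :
    ∃ r' : Fin n → ZMod 2, hammingNorm (r - r') = 1 ∧
      leaderWeight C r' = leaderWeight C r - 1 := by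
  obtain ⟨v, hv, hw⟩ := exists_hammingNorm_eq_leaderWeight C r
  obtain ⟨i, hi⟩ : ∃ i, v i ≠ 0 := by
    by_contra! h
    rw [show v = 0 from funext h, hammingNorm_zero] at hw
    exact hr hw.symm
  refine ⟨r - Pi.single i (v i), by rw [sub_sub_cancel, hammingNorm_single i hi], ?_⟩
  have hle : leaderWeight C (r - Pi.single i (v i)) ≤ hammingNorm (v - Pi.single i (v i)) :=
    leaderWeight_le_hammingNorm C (by rwa [sub_sub_sub_cancel_right])
  have hge := leaderWeight_add_le C (r - Pi.single i (v i)) (Pi.single i (v i))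
  rw [sub_add_cancel, hammingNorm_single i hi] at hge
  have := hammingNorm_sub_single_add_one hi
  omega

theorem exists_descent_to_mem (r : Fin n → ZMod 2) :
    ∃ f : ℕ → (Fin n → ZMod 2), f 0 = r ∧
      (∀ j < leaderWeight C r, hammingNorm (f j - f (j + 1)) = 1 ∧
        leaderWeight C (f (j + 1)) = leaderWeight C (f j) - 1) ∧
      f (leaderWeight C r) ∈ C := by
  generalize hk : leaderWeight C r = k
  induction k generalizing r with
  | zero => exact ⟨fun _ => r, rfl, by simp, (leaderWeight_eq_zero_iff C).mp hk⟩
  | succ k ih =>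
    obtain ⟨r', hdist, hr'⟩ := exists_leaderWeight_eq_sub_one C (r := r) (hk ▸ k.succ_ne_zero)
    obtain ⟨f, rfl, hstep, hmem⟩ := ih r' (by omega)
    refine ⟨fun | 0 => r | j + 1 => f j, rfl, fun j hj => ?_, hmem⟩
    rcases j with _ | j
    · exact ⟨hdist, hr'⟩
    · exact hstep j (by omega)

end LeaderWeight

/-- One step of the leader GDDA always makes progress, and consequently the
algorithm terminates, reaching a codeword after exactly `w = leaderWeight C r`
steps. -/
theorem leader_gdda_terminates (n : ℕ) (C : Submodule (ZMod 2) (Fin n → ZMod 2))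
    (r : Fin n → ZMod 2) (hw : 1 ≤ leaderWeight C r) :
    (∃ r' : Fin n → ZMod 2, hammingNorm (r - r') = 1 ∧
        leaderWeight C r' = leaderWeight C r - 1) ∧
    (∃ f : ℕ → (Fin n → ZMod 2), f 0 = r ∧
        (∀ j < leaderWeight C r, hammingNorm (f j - f (j + 1)) = 1 ∧
          leaderWeight C (f (j + 1)) = leaderWeight C (f j) - 1) ∧
        f (leaderWeight C r) ∈ C) :=
  ⟨exists_leaderWeight_eq_sub_one C (Nat.one_le_iff_ne_zero.mp hw), exists_descent_to_mem C r⟩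
end

section
/- If the leader gradient descent algorithm starting at r terminates at a vector c ∈ C after w = wt(r̄) steps, each changing a single coordinate and strictly decreasing the coset leader weight, then c is a closest codeword to r: d(r, c) = wt(r̄) ≤ d(r, c') for all c' ∈ C. -/
lemma leaderWeight_le_hammingDist {n : ℕ} (C : Submodule (ZMod 2) (Fin n → ZMod 2))
    (r : Fin n → ZMod 2) {c : Fin n → ZMod 2} (hc : c ∈ C) :
    leaderWeight C r ≤ hammingDist r c := by
  refine Nat.sInf_le ⟨r - c, by simpa using C.neg_mem hc, ?_⟩
  rw [hammingDist_comm, hammingDist_eq_hammingNorm, neg_add_eq_sub]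

lemma hammingDist_le_of_steps_le_one {ι : Type*} [Fintype ι] {β : ι → Type*}
    [∀ i, DecidableEq (β i)] (f : ℕ → ∀ i, β i) {k : ℕ}
    (hstep : ∀ j < k, hammingDist (f j) (f (j + 1)) ≤ 1) :
    hammingDist (f 0) (f k) ≤ k := by
  induction k with
  | zero => simp
  | succ m ih =>
    calc hammingDist (f 0) (f (m + 1))
        ≤ hammingDist (f 0) (f m) + hammingDist (f m) (f (m + 1)) := hammingDist_triangle _ _ _
      _ ≤ m + 1 :=
        add_le_add (ih fun j hj => hstep j (hj.trans m.lt_succ_self)) (hstep m m.lt_succ_self)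

/-- If the leader GDDA starting at `r` terminates at a codeword `c` after
`w = leaderWeight C r` steps, each changing one coordinate and strictly
decreasing the coset leader weight, then `c` is a closest codeword to `r`. -/
theorem leader_gdda_correct (n : ℕ) (C : Submodule (ZMod 2) (Fin n → ZMod 2))
    (r c : Fin n → ZMod 2) (f : ℕ → (Fin n → ZMod 2))
    (h0 : f 0 = r) (hend : f (leaderWeight C r) = c) (hc : c ∈ C)
    (hstep : ∀ j < leaderWeight C r, hammingDist (f j) (f (j + 1)) = 1 ∧
      leaderWeight C (f (j + 1)) = leaderWeight C (f j) - 1) :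
    hammingDist r c = leaderWeight C r ∧
      ∀ c' ∈ C, hammingDist r c ≤ hammingDist r c' := by
  have hpath : hammingDist r c ≤ leaderWeight C r := by
    simpa only [h0, hend] using
      hammingDist_le_of_steps_le_one f fun j hj => (hstep j hj).1.le
  have hdist : hammingDist r c = leaderWeight C r :=
    le_antisymm hpath (leaderWeight_le_hammingDist C r hc)
  exact ⟨hdist, fun c' hc' => hdist ▸ leaderWeight_le_hammingDist C r hc'⟩
end

section
/- Let T ⊆ C \ {0} be a test set for C, i.e., for every y ∈ F_2^n not lying in the Voronoi region of 0 (meaning there exists c ∈ C with wt(y − c) < wt(y)) there exists t ∈ T with wt(y − t) < wt(y). Then the test-set gradient descent algorithm, which repeatedly subtracts such a t from r, terminates after finitely many steps at a vector r* with wt(r* − c) ≥ wt(r*) for all c ∈ C, and the accumulated codeword c = r − r* satisfies d(r, c) = min_{c' ∈ C} d(r, c'). -/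
private lemma test_set_aux (n : ℕ) (C : Submodule (ZMod 2) (Fin n → ZMod 2))
    (T : Set (Fin n → ZMod 2)) (hT : T ⊆ (↑C : Set (Fin n → ZMod 2)) \ {0})
    (htest : ∀ y : Fin n → ZMod 2,
      (∃ c ∈ C, hammingNorm (y - c) < hammingNorm y) →
      ∃ t ∈ T, hammingNorm (y - t) < hammingNorm y) :
    ∀ (N : ℕ) (r : Fin n → ZMod 2), hammingNorm r ≤ N →
    ∃ (k : ℕ) (f : ℕ → (Fin n → ZMod 2)), f 0 = r ∧
      (∀ j < k, ∃ t ∈ T, f (j + 1) = f j - t ∧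
        hammingNorm (f (j + 1)) < hammingNorm (f j)) ∧
      (∀ c ∈ C, hammingNorm (f k) ≤ hammingNorm (f k - c)) ∧
      r - f k ∈ C := by
  intro N
  induction N with
  | zero =>
    intro r hr
    exact ⟨0, fun _ => r, rfl, by omega, fun c _ => hr.trans (Nat.zero_le _), by simp⟩
  | succ N ih =>
    intro r hr
    by_cases hv : ∀ c ∈ C, hammingNorm r ≤ hammingNorm (r - c)
    · exact ⟨0, fun _ => r, rfl, by omega, hv, by simp⟩
    · push_neg at hv
      obtain ⟨c, hc, hlt⟩ := hv
      obtain ⟨t, htT, hwt⟩ := htest r ⟨c, hc, hlt⟩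
      obtain ⟨k, f, hf0, hstep, hvor, hmem⟩ := ih (r - t) (by omega)
      refine ⟨k + 1, fun j => if j = 0 then r else f (j - 1), by simp, ?_, ?_, ?_⟩
      · intro j hj
        rcases Nat.eq_zero_or_pos j with h0 | h0
        · subst h0
          exact ⟨t, htT, by simp [hf0], by simpa [hf0]⟩
        · obtain ⟨m, rfl⟩ : ∃ m, j = m + 1 := ⟨j - 1, by omega⟩
          obtain ⟨t', ht'T, he, hl⟩ := hstep m (by omega)
          exact ⟨t', ht'T, by simpa using he, by simpa using hl⟩
      · simpa using hvor
      · have htC : t ∈ C := (hT htT).1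
        have : r - f k = t + ((r - t) - f k) := by ring
        simpa [this] using C.add_mem htC hmem


/-- Correctness and termination of the test-set gradient descent decoding
algorithm: for any received word `r` the algorithm reaches, after finitely many
subtractions of test-set elements, a vector `r*` lying in the Voronoi region of
`0`, and the accumulated codeword `r - r*` is a closest codeword to `r`. -/
theorem test_set_gdda (n : ℕ) (C : Submodule (ZMod 2) (Fin n → ZMod 2))
    (T : Set (Fin n → ZMod 2)) (hT : T ⊆ (↑C : Set (Fin n → ZMod 2)) \ {0})
    (htest : ∀ y : Fin n → ZMod 2,
      (∃ c ∈ C, hammingNorm (y - c) < hammingNorm y) →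
      ∃ t ∈ T, hammingNorm (y - t) < hammingNorm y)
    (r : Fin n → ZMod 2) :
    ∃ (k : ℕ) (f : ℕ → (Fin n → ZMod 2)), f 0 = r ∧
      (∀ j < k, ∃ t ∈ T, f (j + 1) = f j - t ∧
        hammingNorm (f (j + 1)) < hammingNorm (f j)) ∧
      (∀ c ∈ C, hammingNorm (f k) ≤ hammingNorm (f k - c)) ∧
      r - f k ∈ C ∧
      (∀ c' ∈ C, hammingDist r (r - f k) ≤ hammingDist r c') := by
  obtain ⟨k, f, hf0, hstep, hvor, hmem⟩ :=
    test_set_aux n C T hT htest (hammingNorm r) r le_rfl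
  refine ⟨k, f, hf0, hstep, hvor, hmem, ?_⟩
  intro c' hc'
  have h1 : hammingDist r (r - f k) = hammingNorm (f k) := by
    rw [hammingDist_comm]
    simp [hammingDist_eq_hammingNorm]
  have h2 : hammingDist r c' = hammingNorm (f k - (c' - (r - f k))) := by
    rw [hammingDist_comm, hammingDist_eq_hammingNorm]
    congr 1
    ring
  rw [h1, h2]
  exact hvor _ (C.sub_mem hc' hmem)
end

section
/- The set M_C of minimal codewords of a binary linear code C is a test set: for every y ∈ F_2^n such that some codeword c satisfies wt(y − c) < wt(y), there exists a minimal codeword m ∈ M_C with wt(y − m) < wt(y). -/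
/-- `m` is a minimal codeword of `C`: a nonzero codeword whose support does not
properly contain the support of any other nonzero codeword. -/
def IsMinimalCodeword {n : ℕ} (C : Submodule (ZMod 2) (Fin n → ZMod 2))
    (m : Fin n → ZMod 2) : Prop :=
  m ∈ C ∧ m ≠ 0 ∧ ∀ c ∈ C, c ≠ 0 → ¬ ({i | c i ≠ 0} ⊂ {i | m i ≠ 0})

lemma zmod2_key : ∀ a b c : ZMod 2, (b = 0 ∨ c = 0) →
    ((if a - (b + c) ≠ 0 then 1 else 0) + (if a ≠ 0 then 1 else 0) : ℕ)
      = (if a - b ≠ 0 then 1 else 0) + (if a - c ≠ 0 then 1 else 0) := by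
  decide

lemma norm_split {n : ℕ} (y c' c'' : Fin n → ZMod 2)
    (hd : ∀ i, c' i = 0 ∨ c'' i = 0) :
    hammingNorm (y - (c' + c'')) + hammingNorm y
      = hammingNorm (y - c') + hammingNorm (y - c'') := by
  simp only [hammingNorm, Finset.card_filter]
  rw [← Finset.sum_add_distrib, ← Finset.sum_add_distrib]
  apply Finset.sum_congr rfl
  intro i _
  simpa using zmod2_key (y i) (c' i) (c'' i) (hd i)

/-- The set of minimal codewords is a test set. -/
theorem minimal_codewords_test_set (n : ℕ)
    (C : Submodule (ZMod 2) (Fin n → ZMod 2)) (y : Fin n → ZMod 2)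
    (h : ∃ c ∈ C, hammingNorm (y - c) < hammingNorm y) :
    ∃ m : Fin n → ZMod 2, IsMinimalCodeword C m ∧
      hammingNorm (y - m) < hammingNorm y := by
  obtain ⟨c, hcC, hclt⟩ := h
  suffices H : ∀ k (c : Fin n → ZMod 2),
      (Finset.univ.filter (fun i => c i ≠ 0)).card = k →
      c ∈ C → hammingNorm (y - c) < hammingNorm y →
      ∃ m, IsMinimalCodeword C m ∧ hammingNorm (y - m) < hammingNorm y from
    H _ c rfl hcC hclt
  intro k
  induction k using Nat.strong_induction_on with
  | _ k ih =>
  intro c hk hcC hlt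
  have hc0 : c ≠ 0 := by rintro rfl; simp at hlt
  by_cases hmin : ∀ c' ∈ C, c' ≠ 0 → ¬ ({i | c' i ≠ 0} ⊂ {i | c i ≠ 0})
  · exact ⟨c, ⟨hcC, hc0, hmin⟩, hlt⟩
  · push_neg at hmin
    obtain ⟨c', hc'C, hc'0, hss⟩ := hmin
    set c'' : Fin n → ZMod 2 := c - c' with hc''def
    have one_of : ∀ x : ZMod 2, x ≠ 0 → x = 1 := by decide
    have hsub : ∀ i, c' i ≠ 0 → c i ≠ 0 := fun i hi => hss.1 hi
    have hd : ∀ i, c' i = 0 ∨ c'' i = 0 := by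
      intro i
      by_cases h1 : c' i = 0
      · exact Or.inl h1
      · right
        have h2 := one_of _ (hsub i h1)
        have h3 := one_of _ h1
        simp [hc''def, h2, h3]
    have hsum : c = c' + c'' := by simp [hc''def]
    have hns := norm_split y c' c'' hd
    rw [← hsum] at hns
    -- support finsets
    have hssF : (Finset.univ.filter (fun i => c' i ≠ 0))
        ⊂ Finset.univ.filter (fun i => c i ≠ 0) := by
      rw [← Finset.coe_ssubset]
      simpa [Set.ssubset_def, Set.subset_def] using hss
    have hcard' : (Finset.univ.filter (fun i => c' i ≠ 0)).card < k :=
      hk ▸ Finset.card_lt_card hssF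
    obtain ⟨i0, hi0⟩ := Function.ne_iff.mp hc'0
    have hi0' : c' i0 ≠ 0 := by simpa using hi0
    have hsubF : (Finset.univ.filter (fun i => c'' i ≠ 0))
        ⊆ Finset.univ.filter (fun i => c i ≠ 0) := by
      intro i hi
      simp only [Finset.mem_filter, Finset.mem_univ, true_and] at hi ⊢
      intro hci
      rcases hd i with h0 | h0
      · exact hi (by simp [hc''def, hci, h0])
      · exact hi h0
    have hssF2 : (Finset.univ.filter (fun i => c'' i ≠ 0))
        ⊂ Finset.univ.filter (fun i => c i ≠ 0) := by
      refine (Finset.ssubset_iff_of_subset hsubF).mpr ⟨i0, ?_, ?_⟩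
      · simp [hsub i0 hi0']
      · simp only [Finset.mem_filter, Finset.mem_univ, true_and, not_not]
        rcases hd i0 with h0 | h0
        · exact absurd h0 hi0'
        · exact h0
    have hcard'' : (Finset.univ.filter (fun i => c'' i ≠ 0)).card < k :=
      hk ▸ Finset.card_lt_card hssF2
    have hc''C : c'' ∈ C := sub_mem hcC hc'C
    rcases lt_or_ge (hammingNorm (y - c')) (hammingNorm y) with hlt' | hge
    · exact ih _ hcard' c' rfl hc'C hlt'
    · have : hammingNorm (y - c'') < hammingNorm y := by omega
      exact ih _ hcard'' c'' rfl hc''C this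
end

section
/- Let y ∈ F_2^n and c ∈ C with wt(y − c) < wt(y). Then there exists a minimal codeword m ∈ M_C such that |supp(m) ∩ supp(y)| > wt(m)/2, and for any such m, wt(y − m) < wt(y). -/
open Finset

private lemma zmod2_aux : ∀ a b : ZMod 2,
    (a - b ≠ 0) ↔ ((a ≠ 0 ∧ ¬ b ≠ 0) ∨ (b ≠ 0 ∧ ¬ a ≠ 0)) := by decide

private lemma norm_eq (n : ℕ) (x : Fin n → ZMod 2) :
    hammingNorm x = (univ.filter fun i => x i ≠ 0).card := rfl

private lemma key_identity (n : ℕ) (y m : Fin n → ZMod 2) :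
    hammingNorm (y - m) +
      2 * ((univ.filter fun i => m i ≠ 0) ∩ (univ.filter fun i => y i ≠ 0)).card =
    hammingNorm y + hammingNorm m := by
  classical
  set Sy := univ.filter fun i => y i ≠ 0 with hSy
  set Sm := univ.filter fun i => m i ≠ 0 with hSm
  have h1 : (univ.filter fun i => (y - m) i ≠ 0) = (Sy \ Sm) ∪ (Sm \ Sy) := by
    ext i
    simp only [hSy, hSm, mem_union, mem_sdiff, mem_filter, mem_univ, true_and,
      Pi.sub_apply]
    exact zmod2_aux (y i) (m i)
  have hnym : hammingNorm (y - m) = ((Sy \ Sm) ∪ (Sm \ Sy)).card := by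
    rw [norm_eq, h1]
  have hny : hammingNorm y = Sy.card := rfl
  have hnm : hammingNorm m = Sm.card := rfl
  rw [hnym, card_union_of_disjoint (disjoint_sdiff_sdiff), hny, hnm]
  have h2 : (Sy \ Sm).card + (Sm ∩ Sy).card = Sy.card := by
    rw [inter_comm]; exact card_sdiff_add_card_inter Sy Sm
  have h3 : (Sm \ Sy).card + (Sm ∩ Sy).card = Sm.card := card_sdiff_add_card_inter Sm Sy
  omega

private lemma exists_minimal (n : ℕ) (C : Submodule (ZMod 2) (Fin n → ZMod 2))
    (y : Fin n → ZMod 2) :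
    ∀ k (c : Fin n → ZMod 2), hammingNorm c ≤ k → c ∈ C →
    hammingNorm c < 2 * ((univ.filter fun i => c i ≠ 0) ∩ (univ.filter fun i => y i ≠ 0)).card →
    ∃ m : Fin n → ZMod 2, (m ∈ C ∧ m ≠ 0 ∧ ∀ c' ∈ C, c' ≠ 0 →
        ¬ ((univ.filter fun i => c' i ≠ 0) ⊂ (univ.filter fun i => m i ≠ 0))) ∧
      hammingNorm m <
        2 * ((univ.filter fun i => m i ≠ 0) ∩ (univ.filter fun i => y i ≠ 0)).card := by
  classical
  intro k
  induction k with
  | zero =>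
    intro c hk hc hmaj
    exfalso
    have : ((univ.filter fun i => c i ≠ 0) ∩ (univ.filter fun i => y i ≠ 0)).card ≤
        hammingNorm c := by
      rw [norm_eq]; exact card_le_card (inter_subset_left)
    omega
  | succ k ih =>
    intro c hk hc hmaj
    have hcard_le : ((univ.filter fun i => c i ≠ 0) ∩ (univ.filter fun i => y i ≠ 0)).card ≤
        hammingNorm c := by
      rw [norm_eq]; exact card_le_card (inter_subset_left)
    have hc0 : c ≠ 0 := by
      intro h
      have := hammingNorm_eq_zero.mpr h
      omega
    by_cases hmin : ∀ c' ∈ C, c' ≠ 0 →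
        ¬ ((univ.filter fun i => c' i ≠ 0) ⊂ (univ.filter fun i => c i ≠ 0))
    · exact ⟨c, ⟨hc, hc0, hmin⟩, hmaj⟩
    · push_neg at hmin
      obtain ⟨c', hc'C, hc'0, hss⟩ := hmin
      set Sc := univ.filter fun i => c i ≠ 0 with hSc
      set Sc' := univ.filter fun i => c' i ≠ 0 with hSc'
      set Sy := univ.filter fun i => y i ≠ 0 with hSy
      have hsub : Sc' ⊆ Sc := hss.1
      set c'' := c - c' with hc''
      have hc''C : c'' ∈ C := Submodule.sub_mem C hc hc'C
      have hsupp'' : (univ.filter fun i => c'' i ≠ 0) = Sc \ Sc' := by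
        ext i
        simp only [hc'', hSc, hSc', mem_sdiff, mem_filter, mem_univ, true_and, Pi.sub_apply]
        rw [zmod2_aux (c i) (c' i)]
        constructor
        · rintro (⟨h1, h2⟩ | ⟨h1, h2⟩)
          · exact ⟨h1, h2⟩
          · have : i ∈ Sc := hsub (by simp [hSc', h1])
            rw [hSc, mem_filter] at this
            exact absurd this.2 h2
        · rintro ⟨h1, h2⟩
          exact Or.inl ⟨h1, h2⟩
      have hw'' : hammingNorm c'' = Sc.card - Sc'.card := by
        rw [norm_eq, hsupp'', card_sdiff_of_subset hsub]
      have hw : hammingNorm c = Sc.card := rfl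
      have hw' : hammingNorm c' = Sc'.card := rfl
      have hc'pos : 0 < Sc'.card := by
        rw [card_pos]
        obtain ⟨i, hi⟩ := Function.ne_iff.mp hc'0
        exact ⟨i, by simp [hSc']; simpa using hi⟩
      have hc'lt : Sc'.card < Sc.card := card_lt_card hss
      -- split the intersection
      have hsplit : (Sc ∩ Sy).card = (Sc' ∩ Sy).card + ((Sc \ Sc') ∩ Sy).card := by
        rw [← card_union_of_disjoint]
        · congr 1
          rw [← union_inter_distrib_right, union_sdiff_of_subset hsub]
        · exact Finset.disjoint_left.mpr (fun a ha hb => by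
            exact (mem_sdiff.mp (mem_inter.mp hb).1).2 (mem_inter.mp ha).1)
      rw [hw, hsplit] at hmaj
      by_cases hcase : hammingNorm c' < 2 * (Sc' ∩ Sy).card
      · exact ih c' (by omega) hc'C hcase
      · have : hammingNorm c'' < 2 * ((univ.filter fun i => c'' i ≠ 0) ∩ Sy).card := by
          rw [hsupp'', hw'']
          rw [hw'] at hcase
          omega
        exact ih c'' (by omega) hc''C this

open Finset in
/-- If some codeword is strictly closer to `y` than `0` is, then there is a
minimal codeword `m` whose support meets `supp(y)` in more than `wt(m)/2`
positions, and any such minimal codeword satisfies `wt(y - m) < wt(y)`. -/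
theorem minimal_codeword_majority (n : ℕ)
    (C : Submodule (ZMod 2) (Fin n → ZMod 2)) (y c : Fin n → ZMod 2)
    (hc : c ∈ C) (hlt : hammingNorm (y - c) < hammingNorm y) :
    (∃ m : Fin n → ZMod 2, (m ∈ C ∧ m ≠ 0 ∧ ∀ c' ∈ C, c' ≠ 0 →
        ¬ ((univ.filter fun i => c' i ≠ 0) ⊂ (univ.filter fun i => m i ≠ 0))) ∧
      hammingNorm m <
        2 * ((univ.filter fun i => m i ≠ 0) ∩ (univ.filter fun i => y i ≠ 0)).card) ∧
    (∀ m : Fin n → ZMod 2, (m ∈ C ∧ m ≠ 0 ∧ ∀ c' ∈ C, c' ≠ 0 →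
        ¬ ((univ.filter fun i => c' i ≠ 0) ⊂ (univ.filter fun i => m i ≠ 0))) →
      hammingNorm m <
        2 * ((univ.filter fun i => m i ≠ 0) ∩ (univ.filter fun i => y i ≠ 0)).card →
      hammingNorm (y - m) < hammingNorm y) := by
  constructor
  · have hmajc : hammingNorm c <
        2 * ((univ.filter fun i => c i ≠ 0) ∩ (univ.filter fun i => y i ≠ 0)).card := by
      have := key_identity n y c
      omega
    exact exists_minimal n C y (hammingNorm c) c le_rfl hc hmajc
  · intro m _ hmaj
    have := key_identity n y m
    omega
end
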